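/- arXiv:2510.26572 — 2 statements merged into one kernel-verified Lean document; each statement's English description precedes it below -/
import Mathlib

section
/- For all μ, ν ∈ M_G(X), one has ρ̄(μ,ν) = 0 if and only if μ = ν. -/
open MeasureTheory Filter Topology Pointwise

/-- A (left) Følner sequence in `G`: a sequence of nonempty finite subsets of `G` with
`|gFₙ Δ Fₙ|/|Fₙ| → 0` for every `g ∈ G`. -/
def IsFolner {G : Type*} [Group G] [DecidableEq G] (F : ℕ → Finset G) : Prop :=
  (∀ n, (F n).Nonempty) ∧
  ∀ g : G, Tendsto (fun n => ((symmDiff (g • F n) (F n)).card : ℝ) / ((F n).card : ℝ))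
    atTop (nhds 0)

/-- A two-sided Følner sequence in `G`: left Følner and `|Fₙg Δ Fₙ|/|Fₙ| → 0` for all `g`. -/
def IsTwoSidedFolner {G : Type*} [Group G] [DecidableEq G] (F : ℕ → Finset G) : Prop :=
  IsFolner F ∧
  ∀ g : G, Tendsto (fun n => ((symmDiff ((F n).image (fun h => h * g)) (F n)).card : ℝ) /
    ((F n).card : ℝ)) atTop (nhds 0)

/-- A tempered Følner sequence: `|⋃_{k ≤ n} Fₖ⁻¹ F_{n+1}| ≤ C|F_{n+1}|` for some `C > 0`. -/
def IsTempered {G : Type*} [Group G] [DecidableEq G] (F : ℕ → Finset G) : Prop :=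
  ∃ C : ℝ, 0 < C ∧ ∀ n : ℕ,
    ((((Finset.range (n+1)).biUnion fun k => (F k)⁻¹ * F (n+1)).card : ℝ)) ≤
      C * ((F (n+1)).card : ℝ)

/-- The upper asymptotic density of `A ⊆ G` along the Følner sequence `F`. -/
noncomputable def upperDensity {G : Type*} [Group G] (F : ℕ → Finset G) (A : Set G) : ℝ :=
  limsup (fun N => (Nat.card ↥(A ∩ (F N : Set G)) : ℝ) / ((F N).card : ℝ)) atTop

section Action

variable (G : Type*) [Group G] (X : Type*) [MetricSpace X] [CompactSpace X]
  [MeasurableSpace X] [BorelSpace X] [MulAction G X]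

/-- A Borel measure on `X` is `G`-invariant. -/
def IsInvariantMeasure (μ : Measure X) : Prop :=
  ∀ g : G, Measure.map (fun x : X => g • x) μ = μ

/-- Ergodicity: every `G`-invariant Borel set has measure `0` or `1`. -/
def IsErgodicMeasure (μ : Measure X) : Prop :=
  ∀ s : Set X, MeasurableSet s → (∀ g : G, (fun x : X => g • x) ⁻¹' s = s) →
    μ s = 0 ∨ μ s = 1

/-- `x` is generic for `μ` along the Følner sequence `F`: the empirical measures
`(1/|Fₙ|) Σ_{f ∈ Fₙ} δ_{f•x}` converge to `μ` in the weak* topology, i.e. the averages of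
every continuous function converge to its integral. -/
def IsGenericPt (F : ℕ → Finset G) (x : X) (μ : Measure X) : Prop :=
  ∀ φ : C(X, ℝ),
    Tendsto (fun n => (∑ f ∈ F n, φ (f • x)) / ((F n).card : ℝ)) atTop
      (nhds (∫ a, φ a ∂μ))

/-- The Besicovitch pseudometric along the Følner sequence `F`. -/
noncomputable def Besicovitch (F : ℕ → Finset G) (x z : X) : ℝ :=
  limsup (fun N => (∑ g ∈ F N, dist (g • x) (g • z)) / ((F N).card : ℝ)) atTop

/-- `lam` is a joining of `μ` and `ν`: a probability measure on `X × X`, invariant under the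
diagonal `G`-action, with marginals `μ` and `ν`. -/
def IsJoining (lam : Measure (X × X)) (μ ν : Measure X) : Prop :=
  IsProbabilityMeasure lam ∧
  lam.map Prod.fst = μ ∧ lam.map Prod.snd = ν ∧
  ∀ g : G, lam.map (fun p : X × X => (g • p.1, g • p.2)) = lam

/-- The distance `ρ̄(μ,ν) = inf_{λ ∈ J(μ,ν)} ∫ d dλ`. -/
noncomputable def rhoBar (μ ν : Measure X) : ℝ :=
  sInf {r : ℝ | ∃ lam : Measure (X × X), IsJoining G X lam μ ν ∧ r = ∫ p, dist p.1 p.2 ∂lam}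

/-- `D̄_{B,F}(x,ν) = inf{D_{B,F}(x,z) : z ∈ Gen_F(ν)}`, with values in `[0,∞]`
(the infimum of the empty set being `∞`). -/
noncomputable def DBarToMeasure (F : ℕ → Finset G) (ν : Measure X) (x : X) : ENNReal :=
  ⨅ z ∈ {z : X | IsGenericPt G X F z ν}, ENNReal.ofReal (Besicovitch G X F x z)

/-- `ω̂_F(x)`: the set of weak* subsequential limits of the empirical measures of `x`
along `F` (the measures for which `x` is quasigeneric along `F`). -/
def omegaHat (F : ℕ → Finset G) (x : X) : Set (ProbabilityMeasure X) :=
  {μ | ∃ k : ℕ → ℕ, StrictMono k ∧ ∀ φ : C(X, ℝ),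
    Tendsto (fun n => (∑ f ∈ F (k n), φ (f • x)) / ((F (k n)).card : ℝ)) atTop
      (nhds (∫ a, φ a ∂(μ : Measure X)))}

/-- `ν` is a joining of the countable family `μs`: a probability measure on `Xᴺ`,
invariant under the coordinatewise `G`-action, whose `m`-th marginal is `μs m`. -/
def IsCountableJoining (ν : Measure (ℕ → X)) (μs : ℕ → Measure X) : Prop :=
  IsProbabilityMeasure ν ∧
  (∀ g : G, ν.map (fun ω : ℕ → X => fun i => g • ω i) = ν) ∧
  ∀ m : ℕ, ν.map (fun ω : ℕ → X => ω m) = μs m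

/-- `(X,G,μ)` is a factor of `(Xᴺ,G,ν)` (with the coordinatewise action on `Xᴺ`). -/
def IsFactorOfProduct (ν : Measure (ℕ → X)) (μ : Measure X) : Prop :=
  ∃ π : (ℕ → X) → X, Measurable π ∧
    (∀ g : G, ∀ᵐ ω ∂ν, π (fun i => g • ω i) = g • π ω) ∧ ν.map π = μ

/-- Ergodicity of a measure on `Xᴺ` with respect to the coordinatewise `G`-action. -/
def IsErgodicProductMeasure (ν : Measure (ℕ → X)) : Prop :=
  ∀ s : Set (ℕ → X), MeasurableSet s →
    (∀ g : G, (fun ω : ℕ → X => fun i => g • ω i) ⁻¹' s = s) → ν s = 0 ∨ ν s = 1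

end Action


/-!
A joining `λ` of `μ` and `ν` couples the two measures, so for an `L`-Lipschitz `f` the difference
`∫ f dμ - ∫ f dν = ∫ (f x - f y) dλ(x, y)` is at most `L ∫ d dλ`; taking the infimum over joinings,
`|∫ f dμ - ∫ f dν| ≤ L ρ̄(μ, ν)`. The product measure is a joining, so this infimum is over a
nonempty set, and if it vanishes then `μ` and `ν` agree on bounded Lipschitz functions, which
determine a Borel probability measure on a metric space. Conversely, the pushforward of `μ` to the
diagonal is a joining of `μ` with itself on which `d` vanishes.
-/

open NNReal BoundedContinuousFunction

theorem MeasureTheory.ext_of_forall_lipschitz_integral_eq {Ω : Type*} [MeasurableSpace Ω]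
    [PseudoEMetricSpace Ω] [BorelSpace Ω] {μ ν : Measure Ω} [IsProbabilityMeasure μ]
    [IsProbabilityMeasure ν]
    (h : ∀ (f : Ω →ᵇ ℝ) (L : ℝ≥0), LipschitzWith L f → ∫ x, f x ∂μ = ∫ x, f x ∂ν) :
    μ = ν := by
  let μ' : ProbabilityMeasure Ω := ⟨μ, inferInstance⟩
  let ν' : ProbabilityMeasure Ω := ⟨ν, inferInstance⟩
  -- The constant sequence `ν'` converges to `μ'` by the Lipschitz form of the portmanteau theorem.
  have hlim : Tendsto (fun _ : ℕ => ν') atTop (𝓝 μ') := by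
    refine tendsto_iff_forall_lipschitz_integral_tendsto.2 fun f hbdd ⟨L, hf⟩ => ?_
    show Tendsto (fun _ => ∫ x, f x ∂ν) atTop (𝓝 (∫ x, f x ∂μ))
    have hfμν : ∫ x, f x ∂μ = ∫ x, f x ∂ν := h ⟨⟨f, hf.continuous⟩, hbdd⟩ L hf
    rw [hfμν]
    exact tendsto_const_nhds
  exact congrArg Subtype.val (tendsto_nhds_unique tendsto_const_nhds hlim).symm

theorem abs_integral_sub_integral_le_mul_integral_dist {X : Type*} [PseudoMetricSpace X]
    [MeasurableSpace X] [OpensMeasurableSpace X] {lam : Measure (X × X)} [IsFiniteMeasure lam]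
    (hdist : Integrable (fun p : X × X => dist p.1 p.2) lam) (f : X →ᵇ ℝ) {L : ℝ≥0}
    (hf : LipschitzWith L f) :
    |∫ x, f x ∂(lam.map Prod.fst) - ∫ x, f x ∂(lam.map Prod.snd)| ≤
      L * ∫ p, dist p.1 p.2 ∂lam := by
  have hint₁ : Integrable (fun p : X × X => f p.1) lam :=
    (f.integrable _).comp_measurable measurable_fst
  have hint₂ : Integrable (fun p : X × X => f p.2) lam :=
    (f.integrable _).comp_measurable measurable_snd
  rw [integral_map measurable_fst.aemeasurable f.continuous.aestronglyMeasurable,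
    integral_map measurable_snd.aemeasurable f.continuous.aestronglyMeasurable,
    ← integral_sub hint₁ hint₂, ← integral_const_mul]
  refine (abs_integral_le_integral_abs (μ := lam)).trans
    (integral_mono (hint₁.sub hint₂).abs (hdist.const_mul _) fun p => ?_)
  simpa [Real.dist_eq] using hf.dist_le_mul p.1 p.2

section Joining

variable {G : Type*} [Group G] {X : Type*} [MeasurableSpace X] [MulAction G X]

theorem isJoining_prod (hmeas : ∀ g : G, Measurable fun x : X => g • x) {μ ν : Measure X}
    [IsProbabilityMeasure μ] [IsProbabilityMeasure ν] (hμ : IsInvariantMeasure G X μ)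
    (hν : IsInvariantMeasure G X ν) : IsJoining G X (μ.prod ν) μ ν := by
  refine ⟨inferInstance, Measure.map_fst_prod.trans (by simp),
    Measure.map_snd_prod.trans (by simp), fun g => ?_⟩
  change (μ.prod ν).map (Prod.map (g • ·) (g • ·)) = _
  rw [← Measure.map_prod_map _ _ (hmeas g) (hmeas g), hμ g, hν g]

theorem isJoining_map_diag (hmeas : ∀ g : G, Measurable fun x : X => g • x) (μ : Measure X)
    [IsProbabilityMeasure μ] (hμ : IsInvariantMeasure G X μ) :
    IsJoining G X (μ.map fun x => (x, x)) μ μ := by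
  have hdiag : Measurable fun x : X => (x, x) := measurable_id.prodMk measurable_id
  refine ⟨Measure.isProbabilityMeasure_map hdiag.aemeasurable, ?_, ?_, fun g => ?_⟩
  · rw [Measure.map_map measurable_fst hdiag]
    exact Measure.map_id
  · rw [Measure.map_map measurable_snd hdiag]
    exact Measure.map_id
  · have hg : Measurable fun p : X × X => (g • p.1, g • p.2) :=
      ((hmeas g).comp measurable_fst).prodMk ((hmeas g).comp measurable_snd)
    rw [Measure.map_map hg hdiag]
    change μ.map ((fun x => (x, x)) ∘ (g • ·)) = _
    rw [← Measure.map_map hdiag (hmeas g), hμ g]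

theorem rhoBar_self [MetricSpace X] [SecondCountableTopology X] [OpensMeasurableSpace X]
    (hmeas : ∀ g : G, Measurable fun x : X => g • x) (μ : Measure X)
    [IsProbabilityMeasure μ] (hμ : IsInvariantMeasure G X μ) : rhoBar G X μ μ = 0 := by
  have hzero : (0 : ℝ) = ∫ p, dist p.1 p.2 ∂(μ.map fun x : X => (x, x)) := by
    rw [integral_map (by fun_prop : Measurable fun x : X => (x, x)).aemeasurable
      continuous_dist.aestronglyMeasurable]
    simp
  have hmem : (0 : ℝ) ∈ {r : ℝ | ∃ lam, IsJoining G X lam μ μ ∧ r = ∫ p, dist p.1 p.2 ∂lam} :=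
    ⟨_, isJoining_map_diag hmeas μ hμ, hzero⟩
  refine le_antisymm (csInf_le ⟨0, ?_⟩ hmem) (le_csInf ⟨0, hmem⟩ ?_) <;>
    exact fun _ ⟨_, _, hr⟩ => hr ▸ integral_nonneg fun _ => dist_nonneg

theorem abs_integral_sub_integral_le_mul_rhoBar [MetricSpace X] [CompactSpace X]
    [OpensMeasurableSpace X]
    (hmeas : ∀ g : G, Measurable fun x : X => g • x) {μ ν : Measure X}
    [IsProbabilityMeasure μ] [IsProbabilityMeasure ν] (hμ : IsInvariantMeasure G X μ)
    (hν : IsInvariantMeasure G X ν) (f : X →ᵇ ℝ) {L : ℝ≥0} (hf : LipschitzWith L f) :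
    |∫ x, f x ∂μ - ∫ x, f x ∂ν| ≤ L * rhoBar G X μ ν := by
  have hjoin : ∀ r ∈ {r : ℝ | ∃ lam, IsJoining G X lam μ ν ∧ r = ∫ p, dist p.1 p.2 ∂lam},
      |∫ x, f x ∂μ - ∫ x, f x ∂ν| ≤ L * r := by
    rintro r ⟨lam, ⟨hprob, rfl, rfl, -⟩, rfl⟩
    have hdist := (BoundedContinuousFunction.mkOfCompact
      ⟨fun p : X × X => dist p.1 p.2, continuous_dist⟩).integrable lam
    exact abs_integral_sub_integral_le_mul_integral_dist hdist f hf
  have hne : ∃ r, ∃ lam, IsJoining G X lam μ ν ∧ r = ∫ p, dist p.1 p.2 ∂lam :=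
    ⟨_, _, isJoining_prod hmeas hμ hν, rfl⟩
  rcases eq_zero_or_pos L with hL | hL
  · obtain ⟨r, hr⟩ := hne
    simpa [hL] using hjoin r hr
  · rw [← div_le_iff₀' (by exact_mod_cast hL)]
    exact le_csInf hne fun r hr => (div_le_iff₀' (by exact_mod_cast hL)).2 (hjoin r hr)

end Joining

theorem stmt1_general {G : Type*} [Group G]
    {X : Type*} [MetricSpace X] [CompactSpace X] [MeasurableSpace X] [BorelSpace X]
    [MulAction G X] (hact : ∀ g : G, Continuous fun x : X => g • x)
    (μ ν : Measure X) [IsProbabilityMeasure μ] [IsProbabilityMeasure ν]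
    (hμinv : IsInvariantMeasure G X μ) (hνinv : IsInvariantMeasure G X ν) :
    rhoBar G X μ ν = 0 ↔ μ = ν := by
  have hmeas : ∀ g : G, Measurable fun x : X => g • x := fun g => (hact g).measurable
  refine ⟨fun h => ext_of_forall_lipschitz_integral_eq fun f L hf => ?_, ?_⟩
  · have hle := abs_integral_sub_integral_le_mul_rhoBar hmeas hμinv hνinv f hf
    rw [h, mul_zero, abs_nonpos_iff] at hle
    exact sub_eq_zero.1 hle
  · rintro rfl
    exact rhoBar_self hmeas μ hμinv

/-- `ρ̄(μ,ν) = 0` if and only if `μ = ν`. -/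
theorem stmt1 {G : Type*} [Group G] [Countable G] [DecidableEq G]
    {X : Type*} [MetricSpace X] [CompactSpace X] [MeasurableSpace X] [BorelSpace X]
    [MulAction G X] (hact : ∀ g : G, Continuous fun x : X => g • x)
    (μ ν : Measure X) [IsProbabilityMeasure μ] [IsProbabilityMeasure ν]
    (hμinv : IsInvariantMeasure G X μ) (hνinv : IsInvariantMeasure G X ν) :
    rhoBar G X μ ν = 0 ↔ μ = ν :=
  stmt1_general hact μ ν hμinv hνinv
end

section
/- Let μ, ν ∈ M_G(X) be ergodic and let F = (F_n) be any Følner sequence in G. Then for all x ∈ Gen_F(μ) and z ∈ Gen_F(ν) one has liminf_{N→∞} (1/|F_N|) Σ_{g ∈ F_N} d(g·x, g·z) ≥ ρ̄(μ,ν). -/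
/-!
The empirical measures `(1/|F_N|) Σ_{g ∈ F_N} δ_{(g•x, g•z)}` live in the compact space of
probability measures on `X × X`. Along a subsequence realising the liminf they have a cluster
point `λ`. Genericity of `x` and `z` forces the marginals of `λ` to be `μ` and `ν`, and the Følner
property makes `λ` invariant under the diagonal action, so `λ` is a joining. Since the distance is
continuous, `∫ d dλ` equals the liminf, which is therefore at least `ρ̄(μ,ν)`.
-/

open MeasureTheory Filter Topology Pointwise

open scoped ENNReal

section Empirical

variable {G Y : Type*} [Group G] [MulAction G Y] [MeasurableSpace Y]

noncomputable def empiricalMeasure (s : Finset G) (hs : s.Nonempty) (y : Y) :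
    ProbabilityMeasure Y :=
  ⟨(s.card : ℝ≥0∞)⁻¹ • ∑ g ∈ s, Measure.dirac (g • y), by
    constructor
    simp [Finset.card_pos.mpr hs |>.ne', ENNReal.inv_mul_cancel]⟩

theorem integral_empiricalMeasure [MeasurableSingletonClass Y] (s : Finset G) (hs : s.Nonempty)
    (y : Y) (φ : Y → ℝ) :
    ∫ a, φ a ∂(empiricalMeasure s hs y : Measure Y) = (∑ g ∈ s, φ (g • y)) / s.card := by
  simp [empiricalMeasure, integral_smul_measure, integral_finsetSum_measure,
    integrable_dirac, div_eq_inv_mul]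

end Empirical

section Folner

variable {G : Type*} [Group G] [DecidableEq G]

theorem abs_sum_mul_sub_sum_le (s : Finset G) (g : G) {u : G → ℝ} {b : ℝ}
    (hb : ∀ h, |u h| ≤ b) :
    |∑ h ∈ s, u (g * h) - ∑ h ∈ s, u h| ≤ (symmDiff (g • s) s).card * b := by
  have hsum (t : Finset G) : |∑ h ∈ t, u h| ≤ t.card * b := by
    simpa using (Finset.abs_sum_le_sum_abs u t).trans
      (Finset.sum_le_card_nsmul t _ b fun h _ => hb h)
  have hcard : ((symmDiff (g • s) s).card : ℝ) = (g • s \ s).card + (s \ g • s).card := by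
    rw [symmDiff_def, Finset.sup_eq_union, Finset.card_union_of_disjoint disjoint_sdiff_sdiff]
    push_cast; rfl
  have hshift : ∑ h ∈ s, u (g * h) = ∑ h ∈ g • s, u h := by
    rw [Finset.smul_finset_def, Finset.sum_image fun a _ c _ h => smul_left_cancel g h]
    rfl
  rw [hshift, ← Finset.sum_sdiff_sub_sum_sdiff, hcard, add_mul]
  exact (abs_sub _ _).trans (add_le_add (hsum _) (hsum _))

theorem IsFolner.tendsto_sum_mul_sub_sum_div {F : ℕ → Finset G} (hF : IsFolner F) (g : G)
    {u : G → ℝ} {b : ℝ} (hb : ∀ h, |u h| ≤ b) :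
    Tendsto (fun n => (∑ h ∈ F n, u (g * h) - ∑ h ∈ F n, u h) / (F n).card) atTop (𝓝 0) := by
  refine squeeze_zero_norm (fun n => ?_) (by simpa using (hF.2 g).const_mul b)
  have hcard : (0 : ℝ) < (F n).card := by exact_mod_cast (hF.1 n).card_pos
  rw [Real.norm_eq_abs, abs_div, abs_of_pos hcard, mul_div_assoc',
    div_le_div_iff_of_pos_right hcard, mul_comm]
  exact abs_sum_mul_sub_sum_le (F n) g hb

end Folner

namespace MeasureTheory.ProbabilityMeasure

variable {ι Ω : Type*} [TopologicalSpace Ω] [CompactSpace Ω] [MeasurableSpace Ω]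
  [OpensMeasurableSpace Ω] {l : Filter ι} {m : ι → ProbabilityMeasure Ω} {P : ProbabilityMeasure Ω}

theorem integral_eq_of_mapClusterPt (hP : MapClusterPt P l m) (φ : C(Ω, ℝ)) {c : ℝ}
    (h : Tendsto (fun i => ∫ ω, φ ω ∂(m i : Measure Ω)) l (𝓝 c)) :
    ∫ ω, φ ω ∂(P : Measure Ω) = c :=
  have hφ : MapClusterPt (∫ ω, φ ω ∂(P : Measure Ω)) l fun i => ∫ ω, φ ω ∂(m i : Measure Ω) :=
    hP.tendsto_comp (continuous_integral_continuousMap φ).continuousAt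
  eq_of_nhds_neBot (hφ.neBot.mono (inf_le_inf_left _ h))

theorem map_eq_of_mapClusterPt {Z : Type*} [TopologicalSpace Z] [MeasurableSpace Z]
    [HasOuterApproxClosed Z] [BorelSpace Z] (hP : MapClusterPt P l m) {π : Ω → Z}
    (hπ : Continuous π) (μ : Measure Z) [IsFiniteMeasure μ]
    (h : ∀ φ : C(Z, ℝ),
      Tendsto (fun i => ∫ ω, φ (π ω) ∂(m i : Measure Ω)) l (𝓝 (∫ z, φ z ∂μ))) :
    (P : Measure Ω).map π = μ :=
  ext_of_forall_integral_eq_of_IsFiniteMeasure fun f => by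
    rw [integral_map hπ.aemeasurable f.continuous.aestronglyMeasurable]
    exact integral_eq_of_mapClusterPt hP (f.toContinuousMap.comp ⟨π, hπ⟩) (h f.toContinuousMap)

end MeasureTheory.ProbabilityMeasure

theorem IsFolner.map_smul_eq_of_mapClusterPt {G Y ι : Type*} [Group G] [DecidableEq G]
    [MetricSpace Y] [CompactSpace Y] [MeasurableSpace Y] [BorelSpace Y] [MulAction G Y]
    (hact : ∀ g : G, Continuous fun y : Y => g • y) {F : ℕ → Finset G} (hF : IsFolner F)
    {l : Filter ι} {k : ι → ℕ} (hk : Tendsto k l atTop) {y : Y} {P : ProbabilityMeasure Y}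
    (hP : MapClusterPt P l fun i => empiricalMeasure (F (k i)) (hF.1 _) y) (g : G) :
    (P : Measure Y).map (g • ·) = P :=
  ext_of_forall_integral_eq_of_IsFiniteMeasure fun f => by
    let T : C(Y, Y) := ⟨_, hact g⟩
    have hshift : ∫ a, (f.toContinuousMap.comp T - f.toContinuousMap) a ∂(P : Measure Y) = 0 := by
      refine ProbabilityMeasure.integral_eq_of_mapClusterPt hP _ ?_
      have hb (h : G) : |f (h • y)| ≤ ‖f‖ := by simpa using f.norm_coe_le_norm (h • y)
      simpa [integral_empiricalMeasure, Finset.sum_sub_distrib, T, mul_smul, Function.comp_def]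
        using (hF.tendsto_sum_mul_sub_sum_div g hb).comp hk
    rw [integral_map (hact g).aemeasurable f.continuous.aestronglyMeasurable, ← sub_eq_zero]
    exact (integral_sub ((f.compContinuous T).integrable _) (f.integrable _)).symm.trans hshift

theorem stmt7_general {G : Type*} [Group G] [DecidableEq G]
    {X : Type*} [MetricSpace X] [CompactSpace X] [MeasurableSpace X] [BorelSpace X]
    [MulAction G X] (hact : ∀ g : G, Continuous fun x : X => g • x)
    (F : ℕ → Finset G) (hF : IsFolner F)
    (μ ν : Measure X) [IsProbabilityMeasure μ] [IsProbabilityMeasure ν]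
    (x z : X) (hx : IsGenericPt G X F x μ) (hz : IsGenericPt G X F z ν) :
    rhoBar G X μ ν ≤
      liminf (fun N => (∑ g ∈ F N, dist (g • x) (g • z)) / ((F N).card : ℝ)) atTop := by
  set A := fun N => (∑ g ∈ F N, dist (g • x) (g • z)) / ((F N).card : ℝ)
  have hA (N : ℕ) : A N ∈ Set.Icc 0 (Metric.diam (Set.univ : Set X)) := by
    simp only [A, ← Finset.expect_eq_sum_div_card]
    exact ⟨Finset.le_expect (hF.1 N) fun _ _ => dist_nonneg, Finset.expect_le (hF.1 N) fun _ _ =>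
      Metric.dist_le_diam_of_mem isCompact_univ.isBounded trivial trivial⟩
  obtain ⟨k, hAk, hk⟩ := exists_seq_tendsto_liminf (u := A) (f := atTop)
    (isBoundedUnder_of ⟨_, fun N => (hA N).2⟩).isCoboundedUnder_ge
    (isBoundedUnder_of ⟨_, fun N => (hA N).1⟩)
  obtain ⟨P, -, hP⟩ := isCompact_univ.exists_mapClusterPt (f := atTop) (s := Set.univ)
    (u := fun n => empiricalMeasure (F (k n)) (hF.1 _) (x, z)) (by simp)
  have hjoin : IsJoining G X P μ ν :=
    ⟨inferInstance,
      P.map_eq_of_mapClusterPt hP continuous_fst μ fun φ => by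
        simpa [integral_empiricalMeasure, Function.comp_def] using (hx φ).comp hk,
      P.map_eq_of_mapClusterPt hP continuous_snd ν fun φ => by
        simpa [integral_empiricalMeasure, Function.comp_def] using (hz φ).comp hk,
      hF.map_smul_eq_of_mapClusterPt (fun g => (hact g).prodMap (hact g)) hk hP⟩
  have hdist : ∫ p, dist p.1 p.2 ∂(P : Measure (X × X)) = liminf A atTop :=
    P.integral_eq_of_mapClusterPt hP ⟨fun p => dist p.1 p.2, by fun_prop⟩
      (by simpa [integral_empiricalMeasure, Function.comp_def] using hAk)
  exact hdist ▸ csInf_le ⟨0, by rintro _ ⟨lam, -, rfl⟩; exact integral_nonneg fun _ => dist_nonneg⟩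
    ⟨P, hjoin, rfl⟩

/-- for ergodic `μ,ν` and any Følner sequence `F`, if `x ∈ Gen_F(μ)` and
`z ∈ Gen_F(ν)` then `liminf_N (1/|F_N|) Σ_{g∈F_N} d(g•x,g•z) ≥ ρ̄(μ,ν)`. -/
theorem stmt7 {G : Type*} [Group G] [Countable G] [DecidableEq G]
    {X : Type*} [MetricSpace X] [CompactSpace X] [MeasurableSpace X] [BorelSpace X]
    [MulAction G X] (hact : ∀ g : G, Continuous fun x : X => g • x)
    (F : ℕ → Finset G) (hF : IsFolner F)
    (μ ν : Measure X) [IsProbabilityMeasure μ] [IsProbabilityMeasure ν]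
    (hμinv : IsInvariantMeasure G X μ) (hνinv : IsInvariantMeasure G X ν)
    (hμerg : IsErgodicMeasure G X μ) (hνerg : IsErgodicMeasure G X ν)
    (x z : X) (hx : IsGenericPt G X F x μ) (hz : IsGenericPt G X F z ν) :
    rhoBar G X μ ν ≤
      liminf (fun N => (∑ g ∈ F N, dist (g • x) (g • z)) / ((F N).card : ℝ)) atTop :=
  stmt7_general hact F hF μ ν x z hx hz
end
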